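/- Let A = (Q_{2^{s_n}})^{i_n}(Q_{2^{s_{n−1}}})^{i_{n−1}}⋯(Q_{2^{s_1}})^{i_1} be an A-polynomial. If i_1 = i_2 = … = i_k = 1 for some k ∈ {1,2,…,n} (in particular, whenever i_1 = 1), then ∫ A dμ = 0. -/
import Mathlib


open Polynomial MeasureTheory Filter

/-- `r γ s` : the recursively defined scales `r 0 = 1`, `r (s+1) = γ (s+1) * (r s)²`. -/
noncomputable def r (γ : ℕ → ℝ) : ℕ → ℝ
  | 0 => 1
  | s + 1 => γ (s + 1) * (r γ s) ^ 2

/-- `P γ s` : the polynomial `P_{2^s}`, with `P_1 = X - 1` and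
`P_{2^{s+1}} = P_{2^s} · (P_{2^s} + r_s)`. -/
noncomputable def P (γ : ℕ → ℝ) : ℕ → Polynomial ℝ
  | 0 => X - 1
  | s + 1 => P γ s * (P γ s + C (r γ s))

/-- The integral `∫ f dν_s` of a function `f` against the normalized counting measure `ν_s`
on the `2^s` (simple, real) zeros of `P_{2^s} + r_s/2`. -/
noncomputable def nuInt (γ : ℕ → ℝ) (s : ℕ) (f : ℝ → ℝ) : ℝ :=
  (((P γ s + C (r γ s / 2)).roots.map f).sum) / 2 ^ s

noncomputable def qq (γ : ℕ → ℝ) (s : ℕ) : Polynomial ℝ := P γ s + C (r γ s / 2)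

lemma r_pos (γ : ℕ → ℝ) (hγ : ∀ s : ℕ, 0 < γ (s + 1) ∧ γ (s + 1) < 1 / 4) :
    ∀ s, 0 < r γ s := by
  intro s
  induction s with
  | zero => norm_num [r]
  | succ s ih =>
    have := (hγ s).1
    have : (0:ℝ) < γ (s+1) * (r γ s)^2 := by positivity
    simpa [r] using this

lemma P_monic_deg (γ : ℕ → ℝ) : ∀ s, (P γ s).Monic ∧ (P γ s).natDegree = 2 ^ s := by
  intro s
  induction s with
  | zero =>
    have h : P γ 0 = X - C (1:ℝ) := by simp [P]
    rw [h]
    exact ⟨monic_X_sub_C 1, natDegree_X_sub_C 1⟩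
  | succ s ih =>
    have hdegpos : (0:WithBot ℕ) < (P γ s).degree := by
      rw [← natDegree_pos_iff_degree_pos, ih.2]
      positivity
    have hCP : ∀ a : ℝ, (P γ s + C a).Monic := fun a =>
      ih.1.add_of_left (lt_of_le_of_lt degree_C_le hdegpos)
    refine ⟨ih.1.mul (hCP _), ?_⟩
    rw [show P γ (s+1) = P γ s * (P γ s + C (r γ s)) from rfl,
      ih.1.natDegree_mul (hCP _), natDegree_add_C, ih.2]
    ring

lemma qq_monic (γ : ℕ → ℝ) (s : ℕ) : (qq γ s).Monic := by
  have h := P_monic_deg γ s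
  have hdegpos : (0:WithBot ℕ) < (P γ s).degree := by
    rw [← natDegree_pos_iff_degree_pos, h.2]; positivity
  exact h.1.add_of_left (lt_of_le_of_lt degree_C_le hdegpos)

lemma qq_natDegree (γ : ℕ → ℝ) (s : ℕ) : (qq γ s).natDegree = 2 ^ s := by
  rw [qq, natDegree_add_C, (P_monic_deg γ s).2]

lemma qq_succ (γ : ℕ → ℝ) (s : ℕ) :
    qq γ (s+1) = (qq γ s) ^ 2 - C ((r γ s) ^ 2 / 4 - r γ (s+1) / 2) := by
  apply Polynomial.funext
  intro x
  simp [qq, show P γ (s+1) = P γ s * (P γ s + C (r γ s)) from rfl]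
  ring

lemma qq_ne (γ : ℕ → ℝ) (s : ℕ) (a : ℝ) : qq γ s + C a ≠ 0 := by
  intro h
  have h2d : (qq γ s + C a).natDegree = 2^s := by rw [natDegree_add_C, qq_natDegree]
  rw [h, natDegree_zero] at h2d
  exact (pow_ne_zero s two_ne_zero) h2d.symm

lemma sub_C_eq (p : Polynomial ℝ) (a : ℝ) : p - C a = p + C (-a) := by
  rw [sub_eq_add_neg, ← C_neg]

lemma qq_factor (γ : ℕ → ℝ) (hγ : ∀ s : ℕ, 0 < γ (s + 1) ∧ γ (s + 1) < 1 / 4)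
    (s : ℕ) (v : ℝ) (hv : |v| ≤ r γ (s+1) / 2) :
    ∃ w : ℝ, 0 < w ∧ w ≤ r γ s / 2 ∧
      qq γ (s+1) - C v = (qq γ s - C w) * (qq γ s - C (-w)) := by
  have hr := r_pos γ hγ s
  have hγ1 := hγ s
  have hrr : r γ (s+1) = γ (s+1) * (r γ s)^2 := rfl
  have hv1 : -(r γ (s+1)/2) ≤ v := neg_le_of_abs_le hv
  have hv2 : v ≤ r γ (s+1)/2 := le_of_abs_le hv
  have hg : 0 < (1/4 - γ (s+1)) * (r γ s)^2 := by
    apply mul_pos (by linarith [hγ1.2]) (by positivity)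
  have hpos : 0 < (r γ s)^2/4 - r γ (s+1)/2 + v := by nlinarith
  have hle : (r γ s)^2/4 - r γ (s+1)/2 + v ≤ (r γ s)^2/4 := by nlinarith
  refine ⟨Real.sqrt ((r γ s)^2/4 - r γ (s+1)/2 + v), Real.sqrt_pos.mpr hpos, ?_, ?_⟩
  · calc Real.sqrt ((r γ s)^2/4 - r γ (s+1)/2 + v) ≤ Real.sqrt ((r γ s)^2/4) :=
        Real.sqrt_le_sqrt hle
      _ = r γ s / 2 := by
          rw [show (r γ s)^2/4 = (r γ s/2)^2 by ring, Real.sqrt_sq (by linarith)]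
  · have hw2 : (Real.sqrt ((r γ s)^2/4 - r γ (s+1)/2 + v))^2
        = (r γ s)^2/4 - r γ (s+1)/2 + v := Real.sq_sqrt hpos.le
    rw [qq_succ]
    apply Polynomial.funext
    intro x
    simp only [eval_sub, eval_pow, eval_C, eval_mul, eval_neg]
    linear_combination hw2
lemma card_roots_qq (γ : ℕ → ℝ) (hγ : ∀ s : ℕ, 0 < γ (s + 1) ∧ γ (s + 1) < 1 / 4) :
    ∀ s : ℕ, ∀ v : ℝ, |v| ≤ r γ s / 2 →
      Multiset.card ((qq γ s - C v).roots) = 2 ^ s := by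
  intro s
  induction s with
  | zero =>
    intro v hv
    have h : qq γ 0 - C v = X - C (v + 1/2) := by
      apply Polynomial.funext; intro x
      simp [qq, P, r]; ring
    rw [h, roots_X_sub_C]
    simp
  | succ s ih =>
    intro v hv
    obtain ⟨w, hw0, hwle, hfac⟩ := qq_factor γ hγ s v hv
    have h1 : Multiset.card ((qq γ s - C w).roots) = 2 ^ s := by
      apply ih; rw [abs_of_pos hw0]; exact hwle
    have h2 : Multiset.card ((qq γ s - C (-w)).roots) = 2 ^ s := by
      apply ih; rw [abs_neg, abs_of_pos hw0]; exact hwle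
    have hne1 : qq γ s - C w ≠ 0 := by rw [sub_C_eq]; exact qq_ne γ s _
    have hne2 : qq γ s - C (-w) ≠ 0 := by rw [sub_C_eq]; exact qq_ne γ s _
    rw [hfac, roots_mul (mul_ne_zero hne1 hne2), Multiset.card_add, h1, h2, pow_succ]
    ring

lemma qq_comp (γ : ℕ → ℝ) (s : ℕ) : ∀ t, s < t → ∃ G : Polynomial ℝ,
    qq γ t = G.comp ((qq γ s) ^ 2) := by
  intro t ht
  induction t, ht using Nat.le_induction with
  | base =>
    refine ⟨X - C ((r γ s)^2/4 - r γ (s+1)/2), ?_⟩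
    rw [qq_succ]
    simp [sub_comp]
  | succ t ht ih =>
    obtain ⟨G, hG⟩ := ih
    refine ⟨G^2 - C ((r γ t)^2/4 - r γ (t+1)/2), ?_⟩
    rw [qq_succ, hG]
    simp [sub_comp, pow_comp]

lemma sum_roots_const (M : Multiset ℝ) (f : ℝ → ℝ) (c : ℝ) (h : ∀ x ∈ M, f x = c) :
    (M.map f).sum = (Multiset.card M : ℝ) * c := by
  rw [Multiset.map_congr rfl h]
  simp [Multiset.map_const']

lemma odd_sum (γ : ℕ → ℝ) (hγ : ∀ s : ℕ, 0 < γ (s + 1) ∧ γ (s + 1) < 1 / 4)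
    (s : ℕ) : ∀ t, s < t → ∀ v : ℝ, |v| ≤ r γ t / 2 → ∀ F : ℝ → ℝ,
    (∀ y, F (-y) = - F y) →
    (((qq γ t - C v).roots).map (fun x => F ((qq γ s).eval x))).sum = 0 := by
  intro t ht
  induction t, ht using Nat.le_induction with
  | base =>
    intro v hv F hF
    obtain ⟨w, hw0, hwle, hfac⟩ := qq_factor γ hγ s v hv
    have hne1 : qq γ s - C w ≠ 0 := by rw [sub_C_eq]; exact qq_ne γ s _
    have hne2 : qq γ s - C (-w) ≠ 0 := by rw [sub_C_eq]; exact qq_ne γ s _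
    rw [hfac, roots_mul (mul_ne_zero hne1 hne2), Multiset.map_add, Multiset.sum_add]
    have e1 : ((qq γ s - C w).roots.map (fun x => F ((qq γ s).eval x))).sum
        = (Multiset.card (qq γ s - C w).roots : ℝ) * F w := by
      apply sum_roots_const
      intro x hx
      have := isRoot_of_mem_roots hx
      simp only [IsRoot, eval_sub, eval_C] at this
      have : (qq γ s).eval x = w := by linarith
      rw [this]
    have e2 : ((qq γ s - C (-w)).roots.map (fun x => F ((qq γ s).eval x))).sum
        = (Multiset.card (qq γ s - C (-w)).roots : ℝ) * F (-w) := by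
      apply sum_roots_const
      intro x hx
      have := isRoot_of_mem_roots hx
      simp only [IsRoot, eval_sub, eval_C] at this
      have : (qq γ s).eval x = -w := by linarith
      rw [this]
    have c1 : Multiset.card ((qq γ s - C w).roots) = 2 ^ s := by
      apply card_roots_qq γ hγ; rw [abs_of_pos hw0]; exact hwle
    have c2 : Multiset.card ((qq γ s - C (-w)).roots) = 2 ^ s := by
      apply card_roots_qq γ hγ; rw [abs_neg, abs_of_pos hw0]; exact hwle
    rw [e1, e2, c1, c2, hF w]
    ring
  | succ t ht ih =>
    intro v hv F hF
    obtain ⟨w, hw0, hwle, hfac⟩ := qq_factor γ hγ t v hv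
    have hne1 : qq γ t - C w ≠ 0 := by rw [sub_C_eq]; exact qq_ne γ t _
    have hne2 : qq γ t - C (-w) ≠ 0 := by rw [sub_C_eq]; exact qq_ne γ t _
    rw [hfac, roots_mul (mul_ne_zero hne1 hne2), Multiset.map_add, Multiset.sum_add,
      ih w (by rw [abs_of_pos hw0]; exact hwle) F hF,
      ih (-w) (by rw [abs_neg, abs_of_pos hw0]; exact hwle) F hF, add_zero]

lemma main_int (γ : ℕ → ℝ) (hγ : ∀ s : ℕ, 0 < γ (s + 1) ∧ γ (s + 1) < 1 / 4)
    (μ : Measure ℝ)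
    (hμconv : ∀ p : Polynomial ℝ,
      Tendsto (fun s => nuInt γ s (fun x => p.eval x)) atTop (nhds (∫ x, p.eval x ∂μ)))
    (T : Finset ℕ) (f e : ℕ → ℕ) (j0 : ℕ) (hj0 : j0 ∈ T) (he : e j0 = 1)
    (hmin : ∀ j ∈ T, j ≠ j0 → f j0 < f j) :
    ∫ x, ∏ j ∈ T, ((qq γ (f j)).eval x) ^ (e j) ∂μ = 0 := by
  set p : Polynomial ℝ := ∏ j ∈ T, (qq γ (f j)) ^ (e j) with hp
  have hev : ∀ x : ℝ, p.eval x = ∏ j ∈ T, ((qq γ (f j)).eval x) ^ (e j) := by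
    intro x; simp [hp, eval_prod]
  have hg : ∀ j, ∃ g : Polynomial ℝ,
      (j ∈ T → j ≠ j0 → qq γ (f j) = g.comp ((qq γ (f j0)) ^ 2)) := by
    intro j
    by_cases hj : j ∈ T ∧ j ≠ j0
    · obtain ⟨G, hG⟩ := qq_comp γ (f j0) (f j) (hmin j hj.1 hj.2)
      exact ⟨G, fun _ _ => hG⟩
    · exact ⟨0, fun h1 h2 => absurd ⟨h1, h2⟩ hj⟩
  choose g hgs using hg
  set F : ℝ → ℝ := fun y => y * ∏ j ∈ T.erase j0, ((g j).eval (y ^ 2)) ^ (e j) with hF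
  have hFodd : ∀ y, F (-y) = -F y := by
    intro y; simp only [hF, neg_sq]; ring
  have hFval : ∀ x : ℝ, p.eval x = F ((qq γ (f j0)).eval x) := by
    intro x
    rw [hev, ← Finset.mul_prod_erase T _ hj0, he, pow_one, hF]
    congr 1
    apply Finset.prod_congr rfl
    intro j hjj
    have hj1 := Finset.mem_of_mem_erase hjj
    have hj2 := Finset.ne_of_mem_erase hjj
    rw [hgs j hj1 hj2]
    simp [eval_comp]
  have hzero : ∀ t, f j0 < t → nuInt γ t (fun x => p.eval x) = 0 := by
    intro t ht
    have h0 : (0:ℝ) ≤ r γ t / 2 := by linarith [r_pos γ hγ t]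
    have hsum := odd_sum γ hγ (f j0) t ht 0 (by simpa using h0) F hFodd
    rw [show qq γ t - C 0 = qq γ t by simp] at hsum
    have : ((qq γ t).roots.map (fun x => p.eval x)).sum = 0 := by
      rw [Multiset.map_congr rfl (fun x _ => hFval x)]
      exact hsum
    show ((P γ t + C (r γ t / 2)).roots.map (fun x => p.eval x)).sum / 2 ^ t = 0
    rw [show P γ t + C (r γ t / 2) = qq γ t from rfl, this, zero_div]
  have hev0 : (fun t => nuInt γ t (fun x => p.eval x)) =ᶠ[atTop] (fun _ => (0:ℝ)) :=
    eventually_atTop.2 ⟨f j0 + 1, fun t ht => hzero t (by omega)⟩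
  have hlim : Tendsto (fun t => nuInt γ t (fun x => p.eval x)) atTop (nhds 0) :=
    Tendsto.congr' hev0.symm tendsto_const_nhds
  have := tendsto_nhds_unique (hμconv p) hlim
  rw [← this]
  apply integral_congr_ae
  filter_upwards with x using (hev x).symm

lemma bin : ∀ s d : ℕ, d < 2 ^ s → ∃ S : Finset ℕ, S ⊆ Finset.range s ∧ ∑ u ∈ S, 2 ^ u = d := by
  intro s
  induction s with
  | zero =>
    intro d hd
    interval_cases d
    exact ⟨∅, by simp⟩
  | succ s ih =>
    intro d hd
    by_cases h : d < 2 ^ s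
    · obtain ⟨S, hS, hsum⟩ := ih d h
      exact ⟨S, hS.trans (Finset.range_subset_range.2 (Nat.le_succ s)), hsum⟩
    · push_neg at h
      obtain ⟨S, hS, hsum⟩ := ih (d - 2 ^ s) (by rw [pow_succ] at hd; omega)
      refine ⟨insert s S, ?_, ?_⟩
      · intro u hu
        rcases Finset.mem_insert.1 hu with h1 | h1
        · simp [h1]
        · exact Finset.range_subset_range.2 (Nat.le_succ s) (hS h1)
      · have hns : s ∉ S := fun hc => by simpa using Finset.mem_range.1 (hS hc)
        rw [Finset.sum_insert hns, hsum]
        omega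

lemma int_qq_prod (γ : ℕ → ℝ) (hγ : ∀ s : ℕ, 0 < γ (s + 1) ∧ γ (s + 1) < 1 / 4)
    (μ : Measure ℝ)
    (hμconv : ∀ p : Polynomial ℝ,
      Tendsto (fun s => nuInt γ s (fun x => p.eval x)) atTop (nhds (∫ x, p.eval x ∂μ)))
    (s : ℕ) (S : Finset ℕ) (hS : S ⊆ Finset.range s) :
    ∫ x, (qq γ s * ∏ u ∈ S, qq γ u).eval x ∂μ = 0 := by
  have hns : s ∉ S := fun hc => by simpa using Finset.mem_range.1 (hS hc)
  have hprod : ∀ x : ℝ, (qq γ s * ∏ u ∈ S, qq γ u).eval x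
      = ∏ j ∈ insert s S, ((qq γ (id j)).eval x) ^ (fun _ => 1 : ℕ → ℕ) j := by
    intro x
    simp [Finset.prod_insert hns, eval_prod]
  simp_rw [hprod]
  rcases S.eq_empty_or_nonempty with hSe | hSne
  · apply main_int γ hγ μ hμconv (insert s S) id (fun _ => 1) s (Finset.mem_insert_self s S) rfl
    intro j hj hne
    subst hSe
    simp at hj
    exact absurd hj hne
  · apply main_int γ hγ μ hμconv (insert s S) id (fun _ => 1) (S.min' hSne)
      (Finset.mem_insert_of_mem (S.min'_mem hSne)) rfl
    intro j hj hne
    rcases Finset.mem_insert.1 hj with h1 | h1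
    · subst h1
      exact Finset.mem_range.1 (hS (S.min'_mem hSne))
    · exact lt_of_le_of_ne (S.min'_le j h1) (Ne.symm hne)

lemma orth (γ : ℕ → ℝ) (hγ : ∀ s : ℕ, 0 < γ (s + 1) ∧ γ (s + 1) < 1 / 4)
    (μ : Measure ℝ)
    (hμint : ∀ p : Polynomial ℝ, Integrable (fun x => p.eval x) μ)
    (hμconv : ∀ p : Polynomial ℝ,
      Tendsto (fun s => nuInt γ s (fun x => p.eval x)) atTop (nhds (∫ x, p.eval x ∂μ)))
    (s : ℕ) : ∀ p : Polynomial ℝ, p.degree < ((2 ^ s : ℕ) : WithBot ℕ) →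
      ∫ x, (qq γ s).eval x * p.eval x ∂μ = 0 := by
  suffices H : ∀ d : ℕ, ∀ p : Polynomial ℝ, p.natDegree = d →
      p.degree < ((2 ^ s : ℕ) : WithBot ℕ) → ∫ x, (qq γ s).eval x * p.eval x ∂μ = 0 by
    intro p hp
    exact H p.natDegree p rfl hp
  intro d
  induction d using Nat.strong_induction_on with
  | _ d ih =>
    intro p hpd hdeg
    by_cases hp0 : p = 0
    · simp [hp0]
    have hd2 : d < 2 ^ s := by
      have := degree_eq_natDegree hp0
      rw [this, hpd] at hdeg
      exact_mod_cast hdeg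
    obtain ⟨S, hS, hsum⟩ := bin s d hd2
    set m : Polynomial ℝ := ∏ u ∈ S, qq γ u with hm
    have hmne : ∀ u ∈ S, qq γ u ≠ 0 := fun u _ => (qq_monic γ u).ne_zero
    have hmmonic : m.Monic := monic_prod_of_monic S _ (fun u _ => qq_monic γ u)
    have hmdeg : m.natDegree = d := by
      rw [hm, natDegree_prod _ _ hmne]
      rw [← hsum]
      exact Finset.sum_congr rfl (fun u _ => qq_natDegree γ u)
    have hint_m : ∫ x, (qq γ s * m).eval x ∂μ = 0 := int_qq_prod γ hγ μ hμconv s S hS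
    set lc := p.leadingCoeff with hlc
    set p' : Polynomial ℝ := p - C lc * m with hp'
    have hsplit : ∀ x : ℝ, (qq γ s).eval x * p.eval x
        = lc * (qq γ s * m).eval x + (qq γ s * p').eval x := by
      intro x
      simp only [hp', eval_mul, eval_sub, eval_C]
      ring
    have hint2 : ∫ x, (qq γ s * p').eval x ∂μ = 0 := by
      by_cases hp'0 : p' = 0
      · simp [hp'0]
      · have hdm : (C lc * m).degree = p.degree := by
          rw [degree_C_mul (by simpa [hlc] using hp0 : lc ≠ 0),
            degree_eq_natDegree hmmonic.ne_zero, degree_eq_natDegree hp0, hmdeg, hpd]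
        have hlcm : p.leadingCoeff = (C lc * m).leadingCoeff := by
          rw [leadingCoeff_mul, leadingCoeff_C, hmmonic.leadingCoeff, mul_one]
        have hdlt : p'.degree < p.degree := degree_sub_lt hdm.symm hp0 hlcm
        have hnd : p'.natDegree < d := by
          rw [← hpd]
          exact natDegree_lt_natDegree hp'0 hdlt
        have hdeg' : p'.degree < ((2 ^ s : ℕ) : WithBot ℕ) := by
          refine lt_trans hdlt ?_
          rw [degree_eq_natDegree hp0, hpd]
          exact_mod_cast hd2
        exact (by
          have := ih p'.natDegree hnd p' rfl hdeg'
          rw [← this]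
          apply integral_congr_ae
          filter_upwards with x
          simp [eval_mul])
    calc ∫ x, (qq γ s).eval x * p.eval x ∂μ
        = ∫ x, (lc * (qq γ s * m).eval x + (qq γ s * p').eval x) ∂μ := by
          apply integral_congr_ae; filter_upwards with x using hsplit x
      _ = lc * ∫ x, (qq γ s * m).eval x ∂μ + ∫ x, (qq γ s * p').eval x ∂μ := by
          rw [integral_add ((hμint (qq γ s * m)).const_mul lc) (hμint (qq γ s * p')),
            MeasureTheory.integral_const_mul]
      _ = 0 := by rw [hint_m, hint2]; ring

lemma Q_eq (γ : ℕ → ℝ) (hγ : ∀ s : ℕ, 0 < γ (s + 1) ∧ γ (s + 1) < 1 / 4)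
    (μ : Measure ℝ)
    (hμint : ∀ p : Polynomial ℝ, Integrable (fun x => p.eval x) μ)
    (hμpos : ∀ p : Polynomial ℝ, p ≠ 0 → 0 < ∫ x, (p.eval x) ^ 2 ∂μ)
    (hμconv : ∀ p : Polynomial ℝ,
      Tendsto (fun s => nuInt γ s (fun x => p.eval x)) atTop (nhds (∫ x, p.eval x ∂μ)))
    (Q : ℕ → Polynomial ℝ) (hQmonic : ∀ n, (Q n).Monic) (hQdeg : ∀ n, (Q n).natDegree = n)
    (hQorth : ∀ n : ℕ, ∀ p : Polynomial ℝ, p.degree < (n : WithBot ℕ) →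
      ∫ x, (Q n).eval x * p.eval x ∂μ = 0)
    (s : ℕ) : Q (2 ^ s) = qq γ s := by
  by_contra hne
  set D : Polynomial ℝ := Q (2 ^ s) - qq γ s with hD
  have hD0 : D ≠ 0 := fun h => hne (by rwa [hD, sub_eq_zero] at h)
  have hdeq : (Q (2 ^ s)).degree = (qq γ s).degree := by
    rw [degree_eq_natDegree (hQmonic _).ne_zero, degree_eq_natDegree (qq_monic γ s).ne_zero,
      hQdeg, qq_natDegree]
  have hdlt : D.degree < ((2 ^ s : ℕ) : WithBot ℕ) := by
    have := degree_sub_lt hdeq (hQmonic _).ne_zero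
      (by rw [(hQmonic _).leadingCoeff, (qq_monic γ s).leadingCoeff])
    rwa [degree_eq_natDegree (hQmonic _).ne_zero, hQdeg] at this
  have h1 : ∫ x, (Q (2 ^ s)).eval x * D.eval x ∂μ = 0 := hQorth (2 ^ s) D (by exact_mod_cast hdlt)
  have h2 : ∫ x, (qq γ s).eval x * D.eval x ∂μ = 0 := orth γ hγ μ hμint hμconv s D hdlt
  have hsq : ∫ x, (D.eval x) ^ 2 ∂μ = 0 := by
    have hfun : ∀ x : ℝ, (D.eval x) ^ 2
        = (Q (2 ^ s)).eval x * D.eval x - (qq γ s).eval x * D.eval x := by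
      intro x; simp only [hD, eval_sub]; ring
    have hi1 : Integrable (fun x => (Q (2 ^ s)).eval x * D.eval x) μ := by
      have := hμint (Q (2 ^ s) * D)
      simpa [eval_mul] using this
    have hi2 : Integrable (fun x => (qq γ s).eval x * D.eval x) μ := by
      have := hμint (qq γ s * D)
      simpa [eval_mul] using this
    calc ∫ x, (D.eval x) ^ 2 ∂μ
        = ∫ x, ((Q (2 ^ s)).eval x * D.eval x - (qq γ s).eval x * D.eval x) ∂μ := by
          apply integral_congr_ae; filter_upwards with x using hfun x
      _ = 0 := by rw [integral_sub hi1 hi2, h1, h2, sub_zero]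
  exact absurd hsq (ne_of_gt (hμpos D hD0))


theorem stmt_10 (γ : ℕ → ℝ) (hγ : ∀ s : ℕ, 0 < γ (s + 1) ∧ γ (s + 1) < 1 / 4)
    (μ : Measure ℝ) [IsProbabilityMeasure μ]
    (hμint : ∀ p : Polynomial ℝ, Integrable (fun x => p.eval x) μ)
    (hμpos : ∀ p : Polynomial ℝ, p ≠ 0 → 0 < ∫ x, (p.eval x) ^ 2 ∂μ)
    (hμconv : ∀ p : Polynomial ℝ,
      Tendsto (fun s => nuInt γ s (fun x => p.eval x)) atTop (nhds (∫ x, p.eval x ∂μ)))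
    (Q : ℕ → Polynomial ℝ) (hQmonic : ∀ n, (Q n).Monic) (hQdeg : ∀ n, (Q n).natDegree = n)
    (hQorth : ∀ n : ℕ, ∀ p : Polynomial ℝ, p.degree < (n : WithBot ℕ) →
      ∫ x, (Q n).eval x * p.eval x ∂μ = 0)
    (n : ℕ) (hn : 1 ≤ n) (sf idx : ℕ → ℕ)
    (hs1 : 0 < sf 1) (hsmono : ∀ k, 1 ≤ k → k < n → sf k < sf (k + 1))
    (hidx : ∀ k, 1 ≤ k → k ≤ n → idx k = 1 ∨ idx k = 2)
    (k : ℕ) (hk1 : 1 ≤ k) (hk2 : k ≤ n) (hones : ∀ t, 1 ≤ t → t ≤ k → idx t = 1) :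
    ∫ x, ∏ j ∈ Finset.Icc 1 n, ((Q (2 ^ sf j)).eval x) ^ idx j ∂μ = 0 := by
  have hQq : ∀ j : ℕ, Q (2 ^ sf j) = qq γ (sf j) := fun j =>
    Q_eq γ hγ μ hμint hμpos hμconv Q hQmonic hQdeg hQorth (sf j)
  have hchain : ∀ j, 2 ≤ j → j ≤ n → sf 1 < sf j := by
    intro j
    induction j with
    | zero => omega
    | succ j ihj =>
      intro h2 hle
      rcases Nat.lt_or_ge j 2 with hj | hj
      · have hj1 : j = 1 := by omega
        subst hj1
        exact hsmono 1 le_rfl (by omega)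
      · have h1 := ihj hj (by omega)
        have h2' := hsmono j (by omega) (by omega)
        omega
  have hgoal : ∫ x, ∏ j ∈ Finset.Icc 1 n, ((qq γ (sf j)).eval x) ^ idx j ∂μ = 0 := by
    apply main_int γ hγ μ hμconv (Finset.Icc 1 n) sf idx 1
      (Finset.mem_Icc.2 ⟨le_rfl, hn⟩) (hones 1 le_rfl hk1)
    intro j hj hne
    have hj' := Finset.mem_Icc.1 hj
    exact hchain j (by omega) hj'.2
  rw [← hgoal]
  apply integral_congr_ae
  filter_upwards with x
  exact Finset.prod_congr rfl (fun j _ => by rw [hQq j])
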